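/- Let ψ solve B ψ = q where q_r ≥ 0, q_s ≤ 0, and q_n = 0 otherwise, with B the Laplacian of a finite connected weighted graph. Define ℓ_d as the minimum of ψ_n over nodes n at distance d from s. Then ℓ_d ≥ ℓ_{d-1} for all 1 ≤ d ≤ d_max. -/

import Mathlib

open Matrix BigOperators

/-- The weighted Laplacian of a weight function `w` on `Fin N`. -/
def lapMat {N : ℕ} (w : Fin N → Fin N → ℝ) : Matrix (Fin N) (Fin N) ℝ :=
  fun i j => if i = j then ∑ k, w i k else - w i j

/-- Symmetric, nonnegative weights with zero diagonal. -/
def IsWeight {N : ℕ} (w : Fin N → Fin N → ℝ) : Prop :=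
  (∀ i j, w i j = w j i) ∧ (∀ i j, 0 ≤ w i j) ∧ (∀ i, w i i = 0)

/-- The simple graph whose edges are the pairs with nonzero weight. -/
def wGraph {N : ℕ} (w : Fin N → Fin N → ℝ) : SimpleGraph (Fin N) where
  Adj i j := i ≠ j ∧ (w i j ≠ 0 ∨ w j i ≠ 0)
  symm := ⟨fun i j ⟨h1, h2⟩ => ⟨h1.symm, h2.symm⟩⟩
  loopless := ⟨fun i h => h.1 rfl⟩

/-- The dipole vector `ν_rs`: `+1` at `r`, `-1` at `s`, `0` elsewhere. -/
def dipole {N : ℕ} (r s : Fin N) : Fin N → ℝ :=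
  fun i => (if i = r then (1:ℝ) else 0) - (if i = s then (1:ℝ) else 0)

/-- `Bd` is the Moore-Penrose pseudoinverse of `B` (the four Penrose axioms). -/
def IsMoorePenrose {N : ℕ} (B Bd : Matrix (Fin N) (Fin N) ℝ) : Prop :=
  B * Bd * B = B ∧ Bd * B * Bd = Bd ∧ (B * Bd)ᵀ = B * Bd ∧ (Bd * B)ᵀ = Bd * B

/-- The locality factor `η(r,s) = b_rs ν_rs^T B^† ν_rs`. -/
def eta {N : ℕ} (w : Fin N → Fin N → ℝ) (Bdag : Matrix (Fin N) (Fin N) ℝ)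
    (r s : Fin N) : ℝ :=
  w r s * (dipole r s ⬝ᵥ Bdag.mulVec (dipole r s))

/-!
Away from `s`, `(Bψ)_n = ∑_k w_nk (ψ_n - ψ_k) ≥ 0` says that `ψ_n` is at least a weighted average
of its neighbours' values, so a neighbour with larger potential forces one with smaller potential.
Let `u` minimise `ψ` over the vertices at distance `≥ d` from `s`, ties broken by smaller distance,
and let `v` be a neighbour of `u` one step closer to `s`. If `ψ_v ≤ ψ_u`, the tie-breaking puts `v`
at distance `d - 1`; otherwise some neighbour has potential `< ψ_u`, and minimality of `ψ_u` puts
it at distance `d - 1`. Either way `ℓ_{d-1} ≤ ψ_u = ℓ_d`.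
-/

open Finset

namespace SimpleGraph

variable {V : Type*} {G : SimpleGraph V} {u v w : V}

lemma Adj.dist_le_dist_add_one (h : G.Adj v w) (u : V) : G.dist u w ≤ G.dist u v + 1 := by
  have := h.diff_dist_adj (u := u)
  omega

lemma Reachable.exists_adj_dist_add_one_eq (h : G.Reachable u v) (hne : u ≠ v) :
    ∃ w, G.Adj w v ∧ G.dist u w + 1 = G.dist u v := by
  obtain ⟨p, hp⟩ := h.exists_walk_length_eq_dist
  have hnil : ¬p.Nil := fun hn => hne hn.eq
  refine ⟨p.penultimate, Walk.adj_penultimate hnil, le_antisymm ?_ ?_⟩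
  · have := G.dist_le p.dropLast
    have := Walk.length_dropLast_add_one hnil
    omega
  · exact (Walk.adj_penultimate hnil).dist_le_dist_add_one u

end SimpleGraph

lemma wGraph_adj_iff {N : ℕ} {w : Fin N → Fin N → ℝ} (hw : IsWeight w) {i j : Fin N} :
    (wGraph w).Adj i j ↔ w i j ≠ 0 := by
  refine ⟨fun ⟨_, h⟩ => h.elim id (hw.1 i j ▸ ·), fun h => ⟨?_, Or.inl h⟩⟩
  rintro rfl
  exact h (hw.2.2 i)

lemma lapMat_mulVec_apply {N : ℕ} {w : Fin N → Fin N → ℝ} (hdiag : ∀ i, w i i = 0)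
    (ψ : Fin N → ℝ) (i : Fin N) : (lapMat w *ᵥ ψ) i = ∑ k, w i k * (ψ i - ψ k) := by
  have hterm : ∀ j,
      lapMat w i j * ψ j = (if i = j then (∑ k, w i k) * ψ i else 0) - w i j * ψ j := by
    intro j
    by_cases hij : i = j
    · subst hij
      simp [lapMat, hdiag]
    · simp [lapMat, hij]
  simp only [Matrix.mulVec, dotProduct, hterm, sum_sub_distrib, sum_ite_eq, mem_univ, if_true,
    mul_sub, sum_mul]

lemma le_or_exists_lt_of_sum_mul_sub_nonneg {ι : Type*} [Fintype ι] {a f : ι → ℝ} {c : ℝ}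
    (ha : ∀ k, 0 ≤ a k) (hsum : 0 ≤ ∑ k, a k * (c - f k)) {v : ι} (hv : a v ≠ 0) :
    f v ≤ c ∨ ∃ k, a k ≠ 0 ∧ f k < c := by
  by_contra! h
  have hneg : ∑ k, a k * (c - f k) < 0 := by
    refine sum_neg' (fun k _ => ?_) ⟨v, mem_univ v, ?_⟩
    · by_cases hk : a k = 0
      · simp [hk]
      · exact mul_nonpos_of_nonneg_of_nonpos (ha k) (by linarith [h.2 k hk])
    · exact mul_neg_of_pos_of_neg ((ha v).lt_of_ne' hv) (by linarith [h.1])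
  linarith

theorem exists_dist_eq_pred_forall_le_of_lapMat_nonneg {N : ℕ} {w : Fin N → Fin N → ℝ}
    (hw : IsWeight w) (hconn : (wGraph w).Connected) {s : Fin N} {ψ : Fin N → ℝ}
    (hψ : ∀ n, n ≠ s → 0 ≤ (lapMat w *ᵥ ψ) n) {d : ℕ} (hd : 1 ≤ d) {n₀ : Fin N}
    (hn₀ : d ≤ (wGraph w).dist s n₀) :
    ∃ k, (wGraph w).dist s k = d - 1 ∧ ∀ n, d ≤ (wGraph w).dist s n → ψ k ≤ ψ n := by
  classical
  obtain ⟨u, hu, humin⟩ := (univ.filter (fun n => d ≤ (wGraph w).dist s n)).exists_min_image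
    (fun n => toLex (ψ n, (wGraph w).dist s n)) ⟨n₀, by simpa using hn₀⟩
  simp only [mem_filter, mem_univ, true_and, Prod.Lex.toLex_le_toLex] at hu humin
  have hψu : ∀ n, d ≤ (wGraph w).dist s n → ψ u ≤ ψ n := fun n hn =>
    (humin n hn).elim le_of_lt (fun h => h.1.le)
  have hsu : s ≠ u := by
    rintro rfl
    simp only [SimpleGraph.dist_self] at hu
    omega
  obtain ⟨v, hvu, hv⟩ :=
    SimpleGraph.Reachable.exists_adj_dist_add_one_eq (hconn.preconnected s u) hsu
  have hsum : 0 ≤ ∑ k, w u k * (ψ u - ψ k) := lapMat_mulVec_apply hw.2.2 ψ u ▸ hψ u hsu.symm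
  rcases le_or_exists_lt_of_sum_mul_sub_nonneg (hw.2.1 u) hsum ((wGraph_adj_iff hw).1 hvu.symm)
    with hle | ⟨k, hk, hlt⟩
  · refine ⟨v, ?_, fun n hn => hle.trans (hψu n hn)⟩
    by_contra hne
    rcases humin v (by omega) with h | ⟨-, h⟩
    · linarith
    · omega
  · refine ⟨k, ?_, fun n hn => hlt.le.trans (hψu n hn)⟩
    have hkd : (wGraph w).dist s k < d := by
      by_contra! h
      linarith [hψu k h]
    have := ((wGraph_adj_iff hw).2 hk).symm.dist_le_dist_add_one s
    omega

theorem potential_min_increases_with_distance_general {N : ℕ} (w : Fin N → Fin N → ℝ)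
    (hw : IsWeight w) (hconn : (wGraph w).Connected)
    (r s : Fin N) (q ψ : Fin N → ℝ)
    (hq : (lapMat w).mulVec ψ = q)
    (hqr : 0 ≤ q r) (hq0 : ∀ n, n ≠ r → n ≠ s → q n = 0)
    (ℓ : ℕ → ℝ)
    (hl : ∀ d, ℓ d = sInf {x : ℝ | ∃ n, (wGraph w).dist s n = d ∧ x = ψ n}) :
    ∀ d : ℕ, 1 ≤ d → (∃ n, (wGraph w).dist s n = d) → ℓ (d - 1) ≤ ℓ d := by
  rintro d hd ⟨n₀, hn₀⟩
  have hψ : ∀ n, n ≠ s → 0 ≤ (lapMat w *ᵥ ψ) n := fun n hns => by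
    rw [hq]
    by_cases hnr : n = r
    · exact hnr ▸ hqr
    · exact (hq0 n hnr hns).ge
  obtain ⟨k, hk, hkmin⟩ := exists_dist_eq_pred_forall_le_of_lapMat_nonneg hw hconn hψ hd hn₀.ge
  have hbdd : ∀ e : ℕ, BddBelow {x : ℝ | ∃ n, (wGraph w).dist s n = e ∧ x = ψ n} := fun e =>
    ((Set.finite_range ψ).subset (by rintro _ ⟨n, -, rfl⟩; exact ⟨n, rfl⟩)).bddBelow
  rw [hl, hl]
  calc sInf {x : ℝ | ∃ n, (wGraph w).dist s n = d - 1 ∧ x = ψ n}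
      ≤ ψ k := csInf_le (hbdd _) ⟨k, hk, rfl⟩
    _ ≤ sInf {x : ℝ | ∃ n, (wGraph w).dist s n = d ∧ x = ψ n} :=
      le_csInf ⟨ψ n₀, n₀, hn₀, rfl⟩ (by rintro _ ⟨n, hn, rfl⟩; exact hkmin n hn.ge)

theorem potential_min_increases_with_distance {N : ℕ} (w : Fin N → Fin N → ℝ)
    (hw : IsWeight w) (hconn : (wGraph w).Connected)
    (r s : Fin N) (q ψ : Fin N → ℝ)
    (hq : (lapMat w).mulVec ψ = q)
    (hqr : 0 ≤ q r) (hqs : q s ≤ 0) (hq0 : ∀ n, n ≠ r → n ≠ s → q n = 0)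
    (ℓ : ℕ → ℝ)
    (hl : ∀ d, ℓ d = sInf {x : ℝ | ∃ n, (wGraph w).dist s n = d ∧ x = ψ n}) :
    ∀ d : ℕ, 1 ≤ d → (∃ n, (wGraph w).dist s n = d) → ℓ (d - 1) ≤ ℓ d :=
  potential_min_increases_with_distance_general w hw hconn r s q ψ hq hqr hq0 ℓ hl
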